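/- Let A be a real D×D matrix with det A > 0 and SVD A = USVᵀ. Then the rotation matrix R = UVᵀ achieves the maximum of tr(AᵀR) over all R ∈ SO(D), and this maximum equals the sum of the singular values of A. -/

import Mathlib

/-!
Writing `A = U S Vᵀ`, every `R` gives `tr (Aᵀ R) = tr (S M)` with `M = Uᵀ R V` orthogonal. The
diagonal entries of an orthogonal matrix are at most `1` and the singular values are nonnegative,
so `tr (S M) ≤ tr S`, with equality at `M = 1`, i.e. `R = U Vᵀ`. This `R` is a rotation because
`det A = det (U Vᵀ) · ∏ sᵢ > 0` forces `det (U Vᵀ) > 0`, and an orthogonal determinant is `± 1`.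
-/

open Matrix

namespace Matrix

variable {n : Type*} [Fintype n] [DecidableEq n]

theorem trace_transpose_mul_eq_trace_diagonal_mul {α : Type*} [CommSemiring α]
    {A U V R : Matrix n n α} {s : n → α} (hA : A = U * diagonal s * Vᵀ) :
    (Aᵀ * R).trace = (diagonal s * (Uᵀ * R * V)).trace := by
  rw [hA, transpose_mul, transpose_mul, transpose_transpose, diagonal_transpose, mul_assoc,
    trace_mul_comm, ← mul_assoc, ← mul_assoc, mul_assoc]

theorem diag_le_one_of_mem_orthogonalGroup {M : Matrix n n ℝ} (hM : M ∈ orthogonalGroup n ℝ)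
    (i : n) : M i i ≤ 1 :=
  (le_abs_self _).trans (entry_norm_bound_of_unitary hM i i)

theorem trace_diagonal_mul_le_sum_of_mem_orthogonalGroup {s : n → ℝ} (hs : ∀ i, 0 ≤ s i)
    {M : Matrix n n ℝ} (hM : M ∈ orthogonalGroup n ℝ) : (diagonal s * M).trace ≤ ∑ i, s i := by
  simp only [trace, diag, diagonal_mul]
  exact Finset.sum_le_sum fun i _ =>
    mul_le_of_le_one_right (hs i) (diag_le_one_of_mem_orthogonalGroup hM i)

theorem det_eq_one_of_mem_orthogonalGroup_of_det_pos {M : Matrix n n ℝ}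
    (hM : M ∈ orthogonalGroup n ℝ) (hpos : 0 < M.det) : M.det = 1 := by
  rw [← abs_of_pos hpos]
  exact CStarRing.norm_of_mem_unitary (det_of_mem_unitary hM)

end Matrix

theorem optimal_rotation_pos_det_general (D : ℕ) (A U V : Matrix (Fin D) (Fin D) ℝ)
    (s : Fin D → ℝ)
    (hdetA : 0 < A.det)
    (hU : Uᵀ * U = 1) (hV : Vᵀ * V = 1)
    (hnn : ∀ i, 0 ≤ s i)
    (hA : A = U * Matrix.diagonal s * Vᵀ) :
    (U * Vᵀ)ᵀ * (U * Vᵀ) = 1 ∧ (U * Vᵀ).det = 1 ∧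
      (Aᵀ * (U * Vᵀ)).trace = ∑ i, s i ∧
      ∀ R : Matrix (Fin D) (Fin D) ℝ, Rᵀ * R = 1 → R.det = 1 →
        (Aᵀ * R).trace ≤ ∑ i, s i := by
  have hU' : U ∈ orthogonalGroup (Fin D) ℝ := (mem_orthogonalGroup_iff' _ _).2 hU
  have hV' : V ∈ orthogonalGroup (Fin D) ℝ := (mem_orthogonalGroup_iff' _ _).2 hV
  have hUV : U * Vᵀ ∈ orthogonalGroup (Fin D) ℝ := mul_mem hU' (Unitary.star_mem hV')
  have hdet : A.det = (U * Vᵀ).det * ∏ i, s i := by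
    rw [hA, det_mul, det_mul, det_mul, det_diagonal]
    ring
  have hdet_pos : 0 < (U * Vᵀ).det :=
    pos_of_mul_pos_left (hdet ▸ hdetA) (Finset.prod_nonneg fun i _ => hnn i)
  refine ⟨(mem_orthogonalGroup_iff' _ _).1 hUV,
    det_eq_one_of_mem_orthogonalGroup_of_det_pos hUV hdet_pos, ?_, fun R hR _ => ?_⟩
  · rw [trace_transpose_mul_eq_trace_diagonal_mul hA, ← Matrix.mul_assoc Uᵀ, hU,
      Matrix.one_mul, hV, Matrix.mul_one, trace_diagonal]
  · have hR' : R ∈ orthogonalGroup (Fin D) ℝ := (mem_orthogonalGroup_iff' _ _).2 hR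
    rw [trace_transpose_mul_eq_trace_diagonal_mul hA]
    exact trace_diagonal_mul_le_sum_of_mem_orthogonalGroup hnn
      (mul_mem (mul_mem (Unitary.star_mem hU') hR') hV')

theorem optimal_rotation_pos_det (D : ℕ) (A U V : Matrix (Fin D) (Fin D) ℝ)
    (s : Fin D → ℝ)
    (hdetA : 0 < A.det)
    (hU : Uᵀ * U = 1) (hV : Vᵀ * V = 1)
    (hs : Antitone s) (hnn : ∀ i, 0 ≤ s i)
    (hA : A = U * Matrix.diagonal s * Vᵀ) :
    (U * Vᵀ)ᵀ * (U * Vᵀ) = 1 ∧ (U * Vᵀ).det = 1 ∧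
      (Aᵀ * (U * Vᵀ)).trace = ∑ i, s i ∧
      ∀ R : Matrix (Fin D) (Fin D) ℝ, Rᵀ * R = 1 → R.det = 1 →
        (Aᵀ * R).trace ≤ ∑ i, s i :=
  optimal_rotation_pos_det_general D A U V s hdetA hU hV hnn hA
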